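/- Let G₀ : ℝ^d × ℝ^m → ℝ^d satisfy |G₀(θ, y)| ≤ C(1 + |y|)²(1 + |θ|^{n+1}) for some C > 0 and integer n ≥ 1, let η > 0, λ ∈ (0,1], and let r ≥ (n+2)/2. Then the tamed drift H(θ, y) = (G₀(θ, y) + η θ |θ|^{2r}) / (1 + √λ |θ|^{2r}) satisfies the growth bound |H(θ, y)| ≤ K₁|θ| + K₂|y|² + K₃ for all θ, y, with K₁ = η/√λ and constants K₂, K₃ > 0 depending only on λ, η, n and C. -/
import Mathlib


/-- growth bound for the tamed drift
H(θ, y) = (G₀(θ, y) + η θ |θ|^{2r}) / (1 + √λ |θ|^{2r}),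
given |G₀(θ, y)| ≤ C(1 + |y|)²(1 + |θ|^{n+1}), r ≥ (n+2)/2:
|H(θ, y)| ≤ K₁|θ| + K₂|y|² + K₃ with K₁ = η/√λ and K₂, K₃ > 0 depending
only on λ, η, n and C. -/
theorem tamed_drift_growth_bound
    (d m n : ℕ) (hn : 1 ≤ n)
    (G₀ : EuclideanSpace ℝ (Fin d) → EuclideanSpace ℝ (Fin m) → EuclideanSpace ℝ (Fin d))
    (C : ℝ) (hC : 0 < C)
    (hG : ∀ θ y, ‖G₀ θ y‖ ≤ C * (1 + ‖y‖) ^ 2 * (1 + ‖θ‖ ^ (n + 1)))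
    (η lam r : ℝ) (hη : 0 < η) (hlam : 0 < lam) (hlam1 : lam ≤ 1)
    (hr : ((n : ℝ) + 2) / 2 ≤ r) :
    ∃ K₂ > 0, ∃ K₃ > 0, ∀ θ y,
      ‖(1 + Real.sqrt lam * ‖θ‖ ^ (2 * r))⁻¹ • (G₀ θ y + (η * ‖θ‖ ^ (2 * r)) • θ)‖
        ≤ (η / Real.sqrt lam) * ‖θ‖ + K₂ * ‖y‖ ^ 2 + K₃ := by
  set s := Real.sqrt lam with hs
  have hs0 : 0 < s := Real.sqrt_pos.mpr hlam
  have hs1 : s ≤ 1 := by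
    rw [hs, show (1:ℝ) = Real.sqrt 1 by simp]
    exact Real.sqrt_le_sqrt hlam1
  refine ⟨4 * C / s, by positivity, 4 * C / s, by positivity, fun θ y => ?_⟩
  set t := ‖θ‖ with ht
  have ht0 : 0 ≤ t := norm_nonneg θ
  have htr : 0 ≤ t ^ (2 * r) := Real.rpow_nonneg ht0 _
  have hD : 0 < 1 + s * t ^ (2 * r) := by positivity
  have hy0 : 0 ≤ ‖y‖ := norm_nonneg y
  -- key : 1 + t ^ (n+1) ≤ 2/s + 2 * t ^ (2*r)
  have key : 1 + t ^ (n + 1) ≤ 2 / s + 2 * t ^ (2 * r) := by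
    have h2s : (2:ℝ) ≤ 2 / s := by
      rw [le_div_iff₀ hs0]; nlinarith
    rcases le_or_gt t 1 with h1 | h1
    · have : t ^ (n + 1) ≤ 1 := pow_le_one₀ ht0 h1
      nlinarith
    · have hnr : ((n:ℝ) + 1) ≤ 2 * r := by linarith
      have : t ^ (n + 1) ≤ t ^ (2 * r) := by
        rw [show t ^ (n + 1) = t ^ ((n + 1 : ℕ) : ℝ) from (Real.rpow_natCast t (n+1)).symm]
        apply Real.rpow_le_rpow_of_exponent_le h1.le
        push_cast; linarith
      nlinarith
  rw [norm_smul, norm_inv, Real.norm_of_nonneg hD.le, inv_mul_le_iff₀ hD]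
  have hX : ‖G₀ θ y + (η * t ^ (2 * r)) • θ‖
      ≤ C * (1 + ‖y‖) ^ 2 * (1 + t ^ (n + 1)) + η * t ^ (2 * r) * t := by
    calc ‖G₀ θ y + (η * t ^ (2 * r)) • θ‖
        ≤ ‖G₀ θ y‖ + ‖(η * t ^ (2 * r)) • θ‖ := norm_add_le _ _
      _ ≤ C * (1 + ‖y‖) ^ 2 * (1 + t ^ (n + 1)) + η * t ^ (2 * r) * t := by
          rw [norm_smul, Real.norm_of_nonneg (by positivity)]
          exact add_le_add (hG θ y) le_rfl
  refine hX.trans ?_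
  have hA : C * (1 + ‖y‖) ^ 2 * (1 + t ^ (n + 1))
      ≤ C * (2 + 2 * ‖y‖ ^ 2) * (2 / s + 2 * t ^ (2 * r)) := by
    apply mul_le_mul _ key (by positivity) (by positivity)
    nlinarith [sq_nonneg (1 - ‖y‖), hy0, hC.le, mul_nonneg hC.le (sq_nonneg (1 - ‖y‖))]
  have hB : η * t ^ (2 * r) * t ≤ (1 + s * t ^ (2 * r)) * (η / s * t) := by
    have : (1 + s * t ^ (2 * r)) * (η / s * t) = η / s * t + η * t ^ (2*r) * t := by
      field_simp
    rw [this]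
    have : 0 ≤ η / s * t := by positivity
    linarith
  have hA' : C * (2 + 2 * ‖y‖ ^ 2) * (2 / s + 2 * t ^ (2 * r))
      ≤ (1 + s * t ^ (2 * r)) * (4 * C / s * ‖y‖ ^ 2 + 4 * C / s) := by
    rw [show (1 + s * t ^ (2 * r)) * (4 * C / s * ‖y‖ ^ 2 + 4 * C / s)
        = C * (2 + 2 * ‖y‖ ^ 2) * (2 / s + 2 * t ^ (2 * r)) by field_simp; ring]
  have := add_le_add (hA.trans hA') hB
  calc C * (1 + ‖y‖) ^ 2 * (1 + t ^ (n + 1)) + η * t ^ (2 * r) * t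
      ≤ (1 + s * t ^ (2 * r)) * (4 * C / s * ‖y‖ ^ 2 + 4 * C / s)
        + (1 + s * t ^ (2 * r)) * (η / s * t) := add_le_add (hA.trans hA') hB
    _ = (1 + s * t ^ (2 * r)) * (η / s * t + 4 * C / s * ‖y‖ ^ 2 + 4 * C / s) := by ring
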